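/- Let M be a complex-valued continuous kernel on the triangle {(x,t) : 0 ≤ t ≤ x ≤ π} and λ ∈ ℂ. Let e : [0,π] → ℂ be differentiable and satisfy i·e'(x) + ∫₀ˣ M(x,t)·e(t) dt = λ·e(x) with e(0) = 1, and let ψ : [0,π] → ℂ be differentiable and satisfy −i·ψ'(x) + ∫ₓ^π M(t,x)·ψ(t) dt = λ·ψ(x) with ψ(π) = 1. Then e(π) = ψ(0). -/

import Mathlib

open Complex MeasureTheory Set Real

/-!
For solutions `e` of (1) and `ψ` of (13), the equations give
`i (e ψ)' = e(x) ∫ₓ^π M(t,x) ψ(t) dt - ψ(x) ∫₀ˣ M(x,t) e(t) dt` (`volterraPairing`).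
By Fubini both terms integrate over `[0, π]` to the integral of `M(u,v) ψ(u) e(v)` over the
triangle `v ≤ u`, so `i (e(π) ψ(π) - e(0) ψ(0)) = 0`. To have continuous parametric integrals,
the kernel and the solutions are first extended continuously to the whole plane (Tietze).
-/

/-- The triangle `{(x,t) : 0 ≤ t ≤ x ≤ π}`. -/
def Triangle : Set (ℝ × ℝ) := {p | 0 ≤ p.2 ∧ p.2 ≤ p.1 ∧ p.1 ≤ Real.pi}

universe u v in
theorem ContinuousOn.exists_continuous_eqOn {X : Type u} {Y : Type v} [TopologicalSpace X]
    [NormalSpace X] [TopologicalSpace Y] [TietzeExtension.{u, v} Y] {s : Set X} {f : X → Y}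
    (hf : ContinuousOn f s) (hs : IsClosed s) : ∃ g : X → Y, Continuous g ∧ EqOn g f s := by
  obtain ⟨g, hg⟩ := ContinuousMap.exists_restrict_eq hs ⟨s.domRestrict f, hf.domRestrict⟩
  exact ⟨g, g.continuous, fun x hx => DFunLike.congr_fun hg ⟨x, hx⟩⟩

section TriangleFubini

variable {E : Type*} [NormedAddCommGroup E] [NormedSpace ℝ E] {a b : ℝ}

theorem intervalIntegral.integral_indicator_Ici {f : ℝ → E} {c : ℝ} (h : c ∈ Icc a b) :
    ∫ x in a..b, (Ici c).indicator f x = ∫ x in c..b, f x := by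
  have hae : (Ici c).indicator f =ᵐ[volume.restrict (Ioc a b)] (Ioi c).indicator f :=
    ae_restrict_of_ae (indicator_ae_eq_of_ae_eq_set Ioi_ae_eq_Ici.symm)
  rw [intervalIntegral.integral_of_le (h.1.trans h.2), MeasureTheory.integral_congr_ae hae,
    MeasureTheory.integral_indicator measurableSet_Ioi, Measure.restrict_restrict measurableSet_Ioi,
    inter_comm, Ioc_inter_Ioi, sup_eq_right.mpr h.1, intervalIntegral.integral_of_le h.2]

theorem intervalIntegral_integral_swap_triangle (hab : a ≤ b) {F : ℝ × ℝ → E}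
    (hF : IntegrableOn F (Icc a b ×ˢ Icc a b)) :
    ∫ u in a..b, ∫ v in a..u, F (u, v) = ∫ v in a..b, ∫ u in v..b, F (u, v) := by
  set G : ℝ → ℝ → E := fun u v => if v ≤ u then F (u, v) else 0
  have hG : Integrable (Function.uncurry G)
      ((volume.restrict (Ioc a b)).prod (volume.restrict (Ioc a b))) := by
    rw [Measure.prod_restrict]
    exact (hF.mono_set (prod_mono Ioc_subset_Icc_self Ioc_subset_Icc_self)).indicator
      (measurableSet_le measurable_snd measurable_fst)
  calc ∫ u in a..b, ∫ v in a..u, F (u, v)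
      = ∫ u in a..b, ∫ v in a..b, G u v := by
        refine intervalIntegral.integral_congr fun u hu => ?_
        rw [uIcc_of_le hab] at hu
        exact (intervalIntegral.integral_indicator hu).symm
    _ = ∫ v in a..b, ∫ u in a..b, G u v := by
        simp only [intervalIntegral.integral_of_le hab]
        exact integral_integral_swap hG
    _ = ∫ v in a..b, ∫ u in v..b, F (u, v) := by
        refine intervalIntegral.integral_congr fun v hv => ?_
        rw [uIcc_of_le hab] at hv
        exact intervalIntegral.integral_indicator_Ici hv

end TriangleFubini

def lowerTriangle (a b : ℝ) : Set (ℝ × ℝ) := {p | a ≤ p.2 ∧ p.2 ≤ p.1 ∧ p.1 ≤ b}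

theorem isClosed_lowerTriangle (a b : ℝ) : IsClosed (lowerTriangle a b) :=
  (isClosed_le continuous_const continuous_snd).inter
    ((isClosed_le continuous_snd continuous_fst).inter
      (isClosed_le continuous_fst continuous_const))

noncomputable def volterraPairing (a b : ℝ) (M : ℝ → ℝ → ℂ) (e ψ : ℝ → ℂ) (x : ℝ) : ℂ :=
  e x * (∫ t in x..b, M t x * ψ t) - ψ x * ∫ t in a..x, M x t * e t

section VolterraPairing

variable {a b : ℝ} {M : ℝ → ℝ → ℂ} {e ψ : ℝ → ℂ}

theorem continuous_integral_volterra (a : ℝ) (hM : Continuous (Function.uncurry M))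
    (he : Continuous e) : Continuous fun x => ∫ t in a..x, M x t * e t :=
  intervalIntegral.continuous_parametric_intervalIntegral_of_continuous
    (hM.mul (he.comp continuous_snd)) continuous_id

theorem continuous_integral_adjointVolterra (b : ℝ) (hM : Continuous (Function.uncurry M))
    (hψ : Continuous ψ) : Continuous fun x => ∫ t in x..b, M t x * ψ t := by
  simp only [intervalIntegral.integral_symm b]
  exact (intervalIntegral.continuous_parametric_intervalIntegral_of_continuous
    (hM.comp continuous_swap |>.mul (hψ.comp continuous_snd)) continuous_id).neg

theorem integral_volterraPairing_eq_zero_of_continuous (hab : a ≤ b)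
    (hM : Continuous (Function.uncurry M)) (he : Continuous e) (hψ : Continuous ψ) :
    ∫ x in a..b, volterraPairing a b M e ψ x = 0 := by
  have hF : Continuous fun p : ℝ × ℝ => M p.1 p.2 * ψ p.1 * e p.2 :=
    (hM.mul (hψ.comp continuous_fst)).mul (he.comp continuous_snd)
  have hswap := intervalIntegral_integral_swap_triangle hab
    (hF.continuousOn.integrableOn_compact (isCompact_Icc.prod isCompact_Icc))
  unfold volterraPairing
  rw [intervalIntegral.integral_sub (f := fun x => e x * ∫ t in x..b, M t x * ψ t)
    (g := fun x => ψ x * ∫ t in a..x, M x t * e t)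
    ((he.mul (continuous_integral_adjointVolterra b hM hψ)).intervalIntegrable a b)
    ((hψ.mul (continuous_integral_volterra a hM he)).intervalIntegrable a b), sub_eq_zero]
  simp only [← intervalIntegral.integral_const_mul]
  convert hswap.symm using 3 <;> exact intervalIntegral.integral_congr fun t _ => by ring

theorem volterraPairing_eqOn {M' : ℝ → ℝ → ℂ} {e' ψ' : ℝ → ℂ}
    (hM : EqOn (Function.uncurry M') (Function.uncurry M) (lowerTriangle a b))
    (he : EqOn e' e (Icc a b)) (hψ : EqOn ψ' ψ (Icc a b)) :
    EqOn (volterraPairing a b M' e' ψ') (volterraPairing a b M e ψ) (Icc a b) := by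
  intro x hx
  have hadjoint : ∫ t in x..b, M' t x * ψ' t = ∫ t in x..b, M t x * ψ t :=
    intervalIntegral.integral_congr fun t ht => by
      rw [uIcc_of_le hx.2] at ht
      rw [show M' t x = M t x from hM (show (t, x) ∈ lowerTriangle a b from ⟨hx.1, ht.1, ht.2⟩),
        hψ ⟨hx.1.trans ht.1, ht.2⟩]
  have hvolterra : ∫ t in a..x, M' x t * e' t = ∫ t in a..x, M x t * e t :=
    intervalIntegral.integral_congr fun t ht => by
      rw [uIcc_of_le hx.1] at ht
      rw [show M' x t = M x t from hM (show (x, t) ∈ lowerTriangle a b from ⟨ht.1, ht.2, hx.2⟩),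
        he ⟨ht.1, ht.2.trans hx.2⟩]
  rw [volterraPairing, volterraPairing, hadjoint, hvolterra, he hx, hψ hx]

theorem exists_continuous_volterraPairing_eqOn
    (hM : ContinuousOn (Function.uncurry M) (lowerTriangle a b))
    (he : ContinuousOn e (Icc a b)) (hψ : ContinuousOn ψ (Icc a b)) :
    ∃ M' : ℝ → ℝ → ℂ, ∃ e' ψ' : ℝ → ℂ,
      Continuous (Function.uncurry M') ∧ Continuous e' ∧ Continuous ψ' ∧
      EqOn (volterraPairing a b M' e' ψ') (volterraPairing a b M e ψ) (Icc a b) := by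
  obtain ⟨K, hK, hKM⟩ := hM.exists_continuous_eqOn (isClosed_lowerTriangle a b)
  obtain ⟨f, hf, hfe⟩ := he.exists_continuous_eqOn isClosed_Icc
  obtain ⟨g, hg, hgψ⟩ := hψ.exists_continuous_eqOn isClosed_Icc
  refine ⟨Function.curry K, f, g, ?_, hf, hg, volterraPairing_eqOn ?_ hfe hgψ⟩ <;>
    rwa [Function.uncurry_curry]

theorem continuousOn_volterraPairing
    (hM : ContinuousOn (Function.uncurry M) (lowerTriangle a b))
    (he : ContinuousOn e (Icc a b)) (hψ : ContinuousOn ψ (Icc a b)) :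
    ContinuousOn (volterraPairing a b M e ψ) (Icc a b) := by
  obtain ⟨M', e', ψ', hM', he', hψ', heq⟩ := exists_continuous_volterraPairing_eqOn hM he hψ
  refine ContinuousOn.congr ?_ heq.symm
  exact ((he'.mul (continuous_integral_adjointVolterra b hM' hψ')).sub
    (hψ'.mul (continuous_integral_volterra a hM' he'))).continuousOn

theorem integral_volterraPairing_eq_zero (hab : a ≤ b)
    (hM : ContinuousOn (Function.uncurry M) (lowerTriangle a b))
    (he : ContinuousOn e (Icc a b)) (hψ : ContinuousOn ψ (Icc a b)) :
    ∫ x in a..b, volterraPairing a b M e ψ x = 0 := by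
  obtain ⟨M', e', ψ', hM', he', hψ', heq⟩ := exists_continuous_volterraPairing_eqOn hM he hψ
  rw [← integral_volterraPairing_eq_zero_of_continuous hab hM' he' hψ']
  exact intervalIntegral.integral_congr fun x hx => (heq (uIcc_of_le hab ▸ hx)).symm

end VolterraPairing

/-- If `e` solves equation (1) with `e(0) = 1` and `ψ` solves the adjoint equation (13)
with `ψ(π) = 1` (both with the same kernel `M` and spectral parameter `λ`),
then `e(π) = ψ(0)`. -/
theorem stmt_8 (M : ℝ → ℝ → ℂ)
    (hM : ContinuousOn (fun p : ℝ × ℝ => M p.1 p.2) Triangle)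
    (lam : ℂ) (e e' ψ ψ' : ℝ → ℂ)
    (he : ∀ x ∈ Icc (0:ℝ) Real.pi,
      HasDerivWithinAt e (e' x) (Icc 0 Real.pi) x ∧
      Complex.I * e' x + (∫ t in (0:ℝ)..x, M x t * e t) = lam * e x)
    (he0 : e 0 = 1)
    (hψ : ∀ x ∈ Icc (0:ℝ) Real.pi,
      HasDerivWithinAt ψ (ψ' x) (Icc 0 Real.pi) x ∧
      -(Complex.I * ψ' x) + (∫ t in x..Real.pi, M t x * ψ t) = lam * ψ x)
    (hψπ : ψ Real.pi = 1) :
    e Real.pi = ψ 0 := by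
  have hπ : (0:ℝ) ≤ Real.pi := Real.pi_pos.le
  have heC : ContinuousOn e (Icc 0 Real.pi) := fun x hx => (he x hx).1.continuousWithinAt
  have hψC : ContinuousOn ψ (Icc 0 Real.pi) := fun x hx => (hψ x hx).1.continuousWithinAt
  have hderiv : ∀ x ∈ Ioo 0 Real.pi, HasDerivAt (fun y => Complex.I * (e y * ψ y))
      (volterraPairing 0 Real.pi M e ψ x) x := by
    intro x hx
    have hx' := Ioo_subset_Icc_self hx
    refine (((he x hx').1.mul (hψ x hx').1).const_mul Complex.I).hasDerivAt
      (Icc_mem_nhds hx.1 hx.2) |>.congr_deriv ?_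
    rw [volterraPairing]
    linear_combination ψ x * (he x hx').2 - e x * (hψ x hx').2
  have ftc := intervalIntegral.integral_eq_sub_of_hasDerivAt_of_le
    (f := fun y => Complex.I * (e y * ψ y)) hπ (continuousOn_const.mul (heC.mul hψC)) hderiv
    ((continuousOn_volterraPairing hM heC hψC).intervalIntegrable_of_Icc hπ)
  rw [integral_volterraPairing_eq_zero hπ hM heC hψC, he0, hψπ] at ftc
  exact mul_left_cancel₀ Complex.I_ne_zero (by linear_combination -ftc)
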